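/- arXiv:1605.09179 — 2 statements merged into one kernel-verified Lean document; each statement's English description precedes it below -/
import Mathlib

section
/- For any nonnegative integer k, binom(-1/3,k)·binom(-2/3,k) = binom(2k,k)·binom(3k,k)/27^k. -/
/-- Generalized binomial coefficient for a rational `a`. -/
def qchoose (a : ℚ) (k : ℕ) : ℚ := (∏ i ∈ Finset.range k, (a - i)) / (Nat.factorial k)

/-!
Both sides equal `(3k)! / (27^k k!^3)`. Pairing the `i`-th factors of the two numerators gives
`(-1/3 - i)(-2/3 - i) = (3i+1)(3i+2)/9`, and these are exactly the factors of `(3k)!` not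
divisible by 3; the remaining ones, `3(i+1)`, multiply to `3^k k!`.
-/

open Finset Nat

theorem prod_range_three_mul_add_one_mul_add_two_mul_factorial (k : ℕ) :
    (∏ i ∈ range k, (3 * i + 1) * (3 * i + 2)) * 3 ^ k * k ! = (3 * k)! := by
  induction k with
  | zero => simp
  | succ n ih =>
    rw [show 3 * (n + 1) = 3 * n + 1 + 1 + 1 by ring, factorial_succ (3 * n + 1 + 1),
      factorial_succ (3 * n + 1), factorial_succ (3 * n), ← ih, prod_range_succ, factorial_succ,
      pow_succ]
    ring

theorem choose_two_mul_mul_choose_three_mul_mul_factorial_pow (k : ℕ) :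
    (2 * k).choose k * (3 * k).choose k * k ! ^ 3 = (3 * k)! := by
  have h2 := Nat.add_choose_mul_factorial_mul_factorial k k
  have h3 := Nat.add_choose_mul_factorial_mul_factorial (2 * k) k
  rw [show k + k = 2 * k by ring] at h2
  rw [show 2 * k + k = 3 * k by ring, ← h2] at h3
  rw [← h3]
  ring

theorem qchoose_mul_qchoose (a b : ℚ) (k : ℕ) :
    qchoose a k * qchoose b k = (∏ i ∈ range k, (a - i) * (b - i)) / k ! ^ 2 := by
  rw [qchoose, qchoose, _root_.div_mul_div_comm, prod_mul_distrib, sq]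

theorem qchoose_neg_one_third_mul_qchoose_neg_two_thirds (k : ℕ) :
    qchoose (-1/3) k * qchoose (-2/3) k
      = (∏ i ∈ range k, (3 * i + 1) * (3 * i + 2) : ℕ) / (9 ^ k * k ! ^ 2) := by
  have hfactor (i : ℕ) : (-1/3 - i : ℚ) * (-2/3 - i) = ((3 * i + 1) * (3 * i + 2) : ℕ) / 9 := by
    push_cast; ring
  simp_rw [qchoose_mul_qchoose, hfactor, prod_div_distrib, prod_const, card_range, Nat.cast_prod,
    div_div]

theorem qchoose_thirds (k : ℕ) :
    qchoose (-1/3) k * qchoose (-2/3) k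
      = (Nat.choose (2*k) k : ℚ) * (Nat.choose (3*k) k : ℚ) / 27^k := by
  have hprod := congrArg (Nat.cast : ℕ → ℚ)
    (prod_range_three_mul_add_one_mul_add_two_mul_factorial k)
  have hchoose := congrArg (Nat.cast : ℕ → ℚ)
    (choose_two_mul_mul_choose_three_mul_mul_factorial_pow k)
  push_cast at hprod hchoose
  have hfact : (k ! : ℚ) ≠ 0 := by positivity
  rw [qchoose_neg_one_third_mul_qchoose_neg_two_thirds,
    div_eq_div_iff (by positivity) (by positivity),
    show (27 : ℚ) ^ k = 3 ^ k * 9 ^ k by rw [← mul_pow]; norm_num]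
  apply mul_right_cancel₀ hfact
  push_cast
  linear_combination 9 ^ k * (hprod - hchoose)
end

section
/- For any nonnegative integer k, binom(-1/6,k)·binom(-5/6,k) = binom(3k,k)·binom(6k,3k)/432^k. -/
theorem qchoose_zero (a : ℚ) : qchoose a 0 = 1 := by
  simp [qchoose]

theorem qchoose_succ (a : ℚ) (k : ℕ) :
    qchoose a (k + 1) = qchoose a k * (a - k) / (k + 1) := by
  simp only [qchoose, Finset.prod_range_succ, Nat.factorial_succ]
  push_cast
  field_simp

theorem cast_choose_three_mul_mul_choose_six_mul (k : ℕ) :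
    ((3 * k).choose k * (6 * k).choose (3 * k) : ℚ)
      = (6 * k).factorial / (k.factorial * (2 * k).factorial * (3 * k).factorial) := by
  rw [Nat.cast_choose ℚ (by omega : k ≤ 3 * k), Nat.cast_choose ℚ (by omega : 3 * k ≤ 6 * k),
    show 3 * k - k = 2 * k by omega, show 6 * k - 3 * k = 3 * k by omega]
  field_simp

theorem cast_choose_three_mul_mul_choose_six_mul_succ (k : ℕ) :
    ((3 * (k + 1)).choose (k + 1) * (6 * (k + 1)).choose (3 * (k + 1)) : ℚ)
      = (3 * k).choose k * (6 * k).choose (3 * k) * (12 * (6 * k + 1) * (6 * k + 5))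
          / (k + 1) ^ 2 := by
  rw [cast_choose_three_mul_mul_choose_six_mul, cast_choose_three_mul_mul_choose_six_mul,
    show 6 * (k + 1) = 6 * k + 5 + 1 by ring, show 3 * (k + 1) = 3 * k + 2 + 1 by ring,
    show 2 * (k + 1) = 2 * k + 1 + 1 by ring]
  simp only [Nat.factorial_succ]
  push_cast
  field_simp
  ring

theorem qchoose_sixths (k : ℕ) :
    qchoose (-1/6) k * qchoose (-5/6) k
      = (Nat.choose (3*k) k : ℚ) * (Nat.choose (6*k) (3*k) : ℚ) / 432^k := by
  induction k with
  | zero => simp [qchoose_zero]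
  | succ k ih =>
    calc qchoose (-1/6) (k + 1) * qchoose (-5/6) (k + 1)
        = qchoose (-1/6) k * qchoose (-5/6) k * ((-1/6 - k) * (-5/6 - k) / (k + 1) ^ 2) := by
          rw [qchoose_succ, qchoose_succ]
          field_simp
      _ = (3 * k).choose k * (6 * k).choose (3 * k) / 432 ^ k
            * ((-1/6 - k) * (-5/6 - k) / (k + 1) ^ 2) := by rw [ih]
      _ = ((3 * (k + 1)).choose (k + 1) * (6 * (k + 1)).choose (3 * (k + 1)) : ℚ)
            / 432 ^ (k + 1) := by
          rw [cast_choose_three_mul_mul_choose_six_mul_succ]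
          field_simp
          ring
end
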